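/- arXiv:1309.7458 — 2 statements merged into one kernel-verified Lean document; each statement's English description precedes it below -/
import Mathlib

section
/- Let Γ be a finite graph, p : Γ → R_n a path-surjective morphism, and for S ⊆ {e_1,…,e_n} let Γ_S be the subgraph of edges mapping into S ∪ S^{-1}. If b(Γ) ≤ 2n − 1, then there exists a permutation of the petals e_1,…,e_n such that, after reindexing, b(Γ_{S_k}) ≤ 2k − 1 for all k ∈ {1,…,n}, where S_k = {e_1,…,e_k}. -/
structure MGraph where
  V : Type
  E : Type
  bar : E → E
  bar_bar : ∀ e, bar (bar e) = e
  bar_ne : ∀ e, bar e ≠ e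
  ini : E → V

namespace MGraph

variable (G : MGraph)

/-- Terminal vertex of an oriented edge. -/
def ter (e : G.E) : G.V := G.ini (G.bar e)

/-- Two vertices are adjacent if some oriented edge joins them. -/
def Adj (u v : G.V) : Prop := ∃ e : G.E, G.ini e = u ∧ G.ter e = v

/-- The setoid of connectedness on vertices. -/
def compSetoid : Setoid G.V := ⟨Relation.EqvGen G.Adj, Relation.EqvGen.is_equivalence _⟩

/-- The number of connected components. -/
noncomputable def ncomp : ℕ := Nat.card (Quotient G.compSetoid)

/-- The first Betti number `b = E - V + C` (topological edges). -/
noncomputable def betti : ℤ := ((Nat.card G.E / 2 : ℕ) : ℤ) - (Nat.card G.V : ℤ) + (G.ncomp : ℤ)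

def Connected : Prop := Nonempty G.V ∧ ∀ u v : G.V, Relation.EqvGen G.Adj u v

/-- Degree of a vertex: number of oriented edges starting at it. -/
noncomputable def degree (v : G.V) : ℕ := Nat.card {e : G.E // G.ini e = v}

/-- An edge-path: consecutive edges match up. -/
def IsChain (γ : List G.E) : Prop := List.Chain' (fun e e' => G.ter e = G.ini e') γ

/-- A reduced edge-path: no backtracking. -/
def IsReducedPath (γ : List G.E) : Prop :=
  List.Chain' (fun e e' => G.ter e = G.ini e' ∧ e' ≠ G.bar e) γ

end MGraph

/-- A morphism of graphs. -/
structure MGraphHom (G H : MGraph) where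
  toV : G.V → H.V
  toE : G.E → H.E
  map_bar : ∀ e, toE (G.bar e) = H.bar (toE e)
  map_ini : ∀ e, H.ini (toE e) = toV (G.ini e)

/-- A covering map: surjective on vertices and locally bijective on stars. -/
def MGraphHom.IsCovering {G H : MGraph} (f : MGraphHom G H) : Prop :=
  Function.Surjective f.toV ∧
    ∀ v : G.V, Set.BijOn f.toE {e | G.ini e = v} {e | H.ini e = f.toV v}

/-- The rose with `n` petals: one vertex, `n` loop edge-pairs.
The positive orientation of petal `i` is `(i, true)`. -/
def Rose (n : ℕ) : MGraph where
  V := Unit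
  E := Fin n × Bool
  bar e := (e.1, !e.2)
  bar_bar e := by simp
  bar_ne e h := by simpa using congrArg Prod.snd h
  ini _ := ()

/-- A morphism is path-surjective if every reduced path downstairs lifts. -/
def MGraphHom.PathSurjective {G H : MGraph} (p : MGraphHom G H) : Prop :=
  ∀ γ : List H.E, H.IsReducedPath γ → ∃ β : List G.E, G.IsChain β ∧ β.map p.toE = γ

/-- The subgraph `Γ_S` of `Γ` spanned by the edges mapping into the set `S` of
petals of the rose (together with all vertices of `Γ`; isolated vertices do not
affect the Betti number). -/
def petalSub {n : ℕ} (G : MGraph) (p : MGraphHom G (Rose n)) (S : Set (Fin n)) : MGraph where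
  V := G.V
  E := {e : G.E // (p.toE e).1 ∈ S}
  bar e := ⟨G.bar e.1, by rw [p.map_bar]; exact e.2⟩
  bar_bar e := Subtype.ext (G.bar_bar e.1)
  bar_ne e h := G.bar_ne e.1 (congrArg Subtype.val h)
  ini e := G.ini e.1

/-!
Counting oriented edges, twice the Betti number of the spanning subgraph on an edge set `A` is
`|A| - 2|V| + 2c(A)`, and this makes sense for every `A`, not only `bar`-closed ones. Adding a
single oriented edge `x` changes it by `+1` if the endpoints of `x` are already connected in `A`
and by `-1` otherwise; connectivity only grows with `A`, so these increments are monotone and the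
quantity is supermodular. Hence so is `S ↦ b(Γ_S)` on sets of petals, with `b(Γ_∅) ≤ 0`.

The ordering is then chosen greedily. If `b(Γ_s) ≤ 2|s|` but every remaining petal `x` had
`b(Γ_{s ∪ {x}}) ≥ 2|s| + 2`, then by supermodularity these `r = n - |s| ≥ 1` increments, each at
least `d = 2|s| + 2 - b(Γ_s) ≥ 2`, add up to at most `b(Γ) - b(Γ_s) ≤ d + 2r - 3`, which is absurd.
-/

namespace Setoid

variable {α : Type*}

def glue (s : Setoid α) (a b : α) : Setoid α where
  r u v := s u v ∨ ((s u a ∨ s u b) ∧ (s v a ∨ s v b))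
  iseqv := by
    refine ⟨fun u => Or.inl (s.refl u), fun h => ?_, fun huv hvw => ?_⟩
    · exact h.imp s.symm And.symm
    · have touch : ∀ {u v}, s u v → (s v a ∨ s v b) → (s u a ∨ s u b) := fun h =>
        Or.imp (s.trans h) (s.trans h)
      rcases huv with huv | ⟨hu, hv⟩ <;> rcases hvw with hvw | ⟨hv', hw⟩
      · exact Or.inl (s.trans huv hvw)
      · exact Or.inr ⟨touch huv hv', hw⟩
      · exact Or.inr ⟨hu, touch (s.symm hvw) hv⟩
      · exact Or.inr ⟨hu, hw⟩

theorem glue_of_rel {s : Setoid α} {a b : α} (h : s a b) : s.glue a b = s := by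
  ext u v
  refine ⟨fun huv => ?_, Or.inl⟩
  rcases huv with huv | ⟨hu | hu, hv | hv⟩
  · exact huv
  · exact s.trans hu (s.symm hv)
  · exact s.trans hu (s.trans h (s.symm hv))
  · exact s.trans hu (s.trans (s.symm h) (s.symm hv))
  · exact s.trans hu (s.symm hv)

theorem card_quotient_glue_add_one [Finite α] {s : Setoid α} {a b : α} (h : ¬ s a b) :
    Nat.card (Quotient (s.glue a b)) + 1 = Nat.card (Quotient s) := by
  set f : Quotient s → Quotient (s.glue a b) := Quotient.map id fun _ _ => Or.inl
  have hab : (⟦a⟧ : Quotient s) ≠ ⟦b⟧ := fun hq => h (Quotient.exact hq)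
  have himage : f '' {⟦b⟧}ᶜ = Set.univ := by
    refine Set.eq_univ_of_forall (Quotient.ind fun u => ?_)
    by_cases hub : s u b
    · exact ⟨⟦a⟧, hab, Quotient.sound (Or.inr ⟨Or.inl (s.refl a), Or.inr hub⟩)⟩
    · exact ⟨⟦u⟧, fun hq => hub (Quotient.exact hq), rfl⟩
  have hinj : Set.InjOn f {⟦b⟧}ᶜ := by
    refine Quotient.ind fun u hu => Quotient.ind fun v hv huv => Quotient.sound ?_
    have hu : ¬ s u b := fun h => hu (Quotient.sound h)
    have hv : ¬ s v b := fun h => hv (Quotient.sound h)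
    rcases Quotient.exact huv with huv | ⟨hua | hub, hva | hvb⟩
    exacts [huv, s.trans hua (s.symm hva), (hv hvb).elim, (hu hub).elim, (hu hub).elim]
  rw [← Set.ncard_univ, ← himage, hinj.ncard_image, ← Set.ncard_univ (Quotient s),
    Set.compl_eq_univ_sdiff, Set.ncard_sdiff_singleton_add_one (Set.mem_univ _)]

end Setoid

def IsSupermodular {β : Type*} [Lattice β] (f : β → ℤ) : Prop :=
  ∀ a b, f a + f b ≤ f (a ⊔ b) + f (a ⊓ b)

theorem Set.isSupermodular_of_insert_sub_mono {α : Type*} [Finite α] {f : Set α → ℤ}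
    (h : ∀ s t x, s ⊆ t → x ∉ t → f (insert x s) - f s ≤ f (insert x t) - f t) :
    IsSupermodular f := by
  have key : ∀ u r s : Set α, r ⊆ s → Disjoint s u → f (r ∪ u) - f r ≤ f (s ∪ u) - f s := by
    intro u
    induction u, u.toFinite using Set.Finite.induction_on with
    | empty => simp
    | @insert x u hxu _ ih =>
      intro r s hrs hsu
      rw [Set.disjoint_insert_right] at hsu
      have hmarg := h (r ∪ u) (s ∪ u) x (Set.union_subset_union_left u hrs)
        (by simp [hsu.1, hxu])
      have := ih r s hrs hsu.2
      rw [Set.union_insert, Set.union_insert]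
      linarith
  intro a b
  have := key (b \ a) (a ∩ b) a Set.inter_subset_left Set.disjoint_sdiff_right
  rw [Set.union_sdiff_self, Set.inter_comm, Set.inter_union_sdiff, Set.inter_comm] at this
  show f a + f b ≤ f (a ∪ b) + f (a ∩ b)
  linarith

namespace MGraph

variable (G : MGraph)

def adjOn (A : Set G.E) (u v : G.V) : Prop := ∃ e ∈ A, G.ini e = u ∧ G.ter e = v

def setoidOn (A : Set G.E) : Setoid G.V := Relation.EqvGen.setoid (G.adjOn A)

noncomputable def ncompOn (A : Set G.E) : ℕ := Nat.card (Quotient (G.setoidOn A))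

noncomputable def twiceBettiOn (A : Set G.E) : ℤ :=
  A.ncard - 2 * Nat.card G.V + 2 * G.ncompOn A

variable {G}

theorem setoidOn_mono {A B : Set G.E} (h : A ⊆ B) : G.setoidOn A ≤ G.setoidOn B :=
  Setoid.eqvGen_mono fun _ _ ⟨e, he, hu, hv⟩ => ⟨e, h he, hu, hv⟩

theorem setoidOn_insert (x : G.E) (A : Set G.E) :
    G.setoidOn (insert x A) = (G.setoidOn A).glue (G.ini x) (G.ter x) := by
  refine le_antisymm (Setoid.eqvGen_le ?_) fun u v huv => ?_
  · rintro u v ⟨e, rfl | he, rfl, rfl⟩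
    · exact Or.inr ⟨Or.inl ((G.setoidOn A).iseqv.refl _), Or.inr ((G.setoidOn A).iseqv.refl _)⟩
    · exact Or.inl (Relation.EqvGen.rel _ _ ⟨e, he, rfl, rfl⟩)
  have hs := (G.setoidOn (insert x A)).iseqv
  have hA : ∀ {u v}, G.setoidOn A u v → G.setoidOn (insert x A) u v :=
    fun h => setoidOn_mono (Set.subset_insert x A) h
  have hx : G.setoidOn (insert x A) (G.ini x) (G.ter x) :=
    Relation.EqvGen.rel _ _ ⟨x, Set.mem_insert x A, rfl, rfl⟩
  have touch : ∀ {w}, (G.setoidOn A w (G.ini x) ∨ G.setoidOn A w (G.ter x)) →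
      G.setoidOn (insert x A) w (G.ini x) :=
    fun h => h.elim hA fun h => hs.trans (hA h) (hs.symm hx)
  rcases huv with huv | ⟨hu, hv⟩
  · exact hA huv
  · exact hs.trans (touch hu) (hs.symm (touch hv))

variable [Finite G.E]

theorem twiceBettiOn_insert_of_rel {x : G.E} {A : Set G.E} (hx : x ∉ A)
    (h : G.setoidOn A (G.ini x) (G.ter x)) :
    G.twiceBettiOn (insert x A) = G.twiceBettiOn A + 1 := by
  simp only [twiceBettiOn, ncompOn, setoidOn_insert, Setoid.glue_of_rel h,
    Set.ncard_insert_of_notMem hx]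
  push_cast
  ring

variable [Finite G.V]

theorem twiceBettiOn_insert_of_not_rel {x : G.E} {A : Set G.E} (hx : x ∉ A)
    (h : ¬ G.setoidOn A (G.ini x) (G.ter x)) :
    G.twiceBettiOn (insert x A) = G.twiceBettiOn A - 1 := by
  have hcomp := Setoid.card_quotient_glue_add_one h
  simp only [twiceBettiOn, ncompOn, setoidOn_insert, Set.ncard_insert_of_notMem hx]
  omega

theorem twiceBettiOn_insert_sub_mono {A B : Set G.E} {x : G.E} (hAB : A ⊆ B) (hx : x ∉ B) :
    G.twiceBettiOn (insert x A) - G.twiceBettiOn A ≤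
      G.twiceBettiOn (insert x B) - G.twiceBettiOn B := by
  have hxA : x ∉ A := fun h => hx (hAB h)
  by_cases hB : G.setoidOn B (G.ini x) (G.ter x)
  · rw [twiceBettiOn_insert_of_rel hx hB]
    by_cases hA : G.setoidOn A (G.ini x) (G.ter x)
    · rw [twiceBettiOn_insert_of_rel hxA hA]
      omega
    · rw [twiceBettiOn_insert_of_not_rel hxA hA]
      omega
  · have hA : ¬ G.setoidOn A (G.ini x) (G.ter x) := fun hA => hB (setoidOn_mono hAB hA)
    rw [twiceBettiOn_insert_of_not_rel hx hB, twiceBettiOn_insert_of_not_rel hxA hA]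
    omega

theorem isSupermodular_twiceBettiOn : IsSupermodular G.twiceBettiOn :=
  Set.isSupermodular_of_insert_sub_mono fun _ _ _ => twiceBettiOn_insert_sub_mono

end MGraph

namespace IsSupermodular

variable {α : Type*} [DecidableEq α] {f : Finset α → ℤ}

theorem card_mul_le_sub (hf : IsSupermodular f) {s u : Finset α} (hsu : Disjoint s u) {d : ℤ}
    (hd : ∀ x ∈ u, d ≤ f (insert x s) - f s) : d * u.card ≤ f (s ∪ u) - f s := by
  induction u using Finset.induction_on with
  | empty => simp
  | @insert x u hxu ih =>
    rw [Finset.disjoint_insert_right] at hsu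
    have hsup := hf (insert x s) (s ∪ u)
    have hunion : insert x s ⊔ (s ∪ u) = s ∪ insert x u := by
      rw [Finset.sup_eq_union]; grind
    have hinter : insert x s ⊓ (s ∪ u) = s := by
      rw [Finset.inf_eq_inter]; grind
    rw [hunion, hinter] at hsup
    have hx := hd x (Finset.mem_insert_self x u)
    have hu := ih hsu.2 fun y hy => hd y (Finset.mem_insert_of_mem hy)
    rw [Finset.card_insert_of_notMem hxu]
    push_cast
    linarith

theorem exists_insert_lt [Fintype α] (hf : IsSupermodular f) {c : ℤ} {s : Finset α}
    (hs : s ≠ Finset.univ) (hfs : f s ≤ c * s.card)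
    (huniv : f Finset.univ < c * Fintype.card α) :
    ∃ x ∉ s, f (insert x s) < c * (s.card + 1) := by
  by_contra! hge
  have hsum := hf.card_mul_le_sub disjoint_compl_right (d := c * (s.card + 1) - f s)
    fun x hx => by linarith [hge x (Finset.mem_compl.mp hx)]
  have hcard : s.card < Fintype.card α := (s.card_lt_iff_ne_univ).mpr hs
  rw [Finset.union_compl, Finset.card_compl, Nat.cast_sub hcard.le] at hsum
  nlinarith

theorem exists_list_lt [Fintype α] (hf : IsSupermodular f) {c : ℤ} (hempty : f ∅ ≤ 0)
    (huniv : f Finset.univ < c * Fintype.card α) :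
    ∃ l : List α, l.Nodup ∧ l.length = Fintype.card α ∧
      ∀ k < Fintype.card α, f (l.take (k + 1)).toFinset < c * (k + 1) := by
  suffices h : ∀ m ≤ Fintype.card α, ∃ l : List α, l.Nodup ∧ l.length = m ∧
      f l.toFinset ≤ c * m ∧ ∀ k < m, f (l.take (k + 1)).toFinset < c * (k + 1) by
    obtain ⟨l, hl, hlen, -, hlt⟩ := h _ le_rfl
    exact ⟨l, hl, hlen, hlt⟩
  intro m
  induction m with
  | zero => exact fun _ => ⟨[], List.nodup_nil, rfl, by simpa using hempty, by simp⟩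
  | succ m ih =>
    intro hm
    obtain ⟨l, hl, hlen, hfl, hlt⟩ := ih (Nat.le_of_succ_le hm)
    have hcard : l.toFinset.card = m := by rw [List.toFinset_card_of_nodup hl, hlen]
    have hne : l.toFinset ≠ Finset.univ :=
      (l.toFinset.card_lt_iff_ne_univ).mp (by omega)
    obtain ⟨x, hx, hfx⟩ := hf.exists_insert_lt hne (by rwa [hcard]) huniv
    rw [hcard] at hfx
    have hxl : x ∉ l := fun h => hx (List.mem_toFinset.mpr h)
    have htoFinset : (l ++ [x]).toFinset = insert x l.toFinset := by
      ext y
      simp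
    refine ⟨l ++ [x], hl.append (List.nodup_singleton x) (by simpa using hxl), by simp [hlen],
      by rw [htoFinset]; push_cast; exact hfx.le, fun k hk => ?_⟩
    rcases Nat.lt_succ_iff_lt_or_eq.mp hk with hk | rfl
    · rw [List.take_append_of_le_length (by omega)]
      exact hlt k hk
    · rw [List.take_of_length_le (by simp [hlen]), htoFinset]
      exact_mod_cast hfx

end IsSupermodular

theorem List.Nodup.exists_perm_setOf_le {n : ℕ} {l : List (Fin n)} (hl : l.Nodup)
    (hlen : l.length = n) :
    ∃ σ : Equiv.Perm (Fin n), ∀ k : Fin n,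
      {i | ∃ j, j ≤ k ∧ σ j = i} = ↑(l.take (k + 1)).toFinset := by
  have hinj : Function.Injective fun j : Fin n => l[j.1]'(j.2.trans_eq hlen.symm) :=
    fun a b hab => Fin.ext ((hl.getElem_inj_iff).mp hab)
  refine ⟨Equiv.ofBijective _ hinj.bijective_of_finite, fun k => ?_⟩
  ext i
  simp only [Set.mem_ofPred_eq, Equiv.ofBijective_apply, List.coe_toFinset,
    List.mem_take_iff_getElem]
  constructor
  · rintro ⟨j, hjk, rfl⟩
    exact ⟨j, by rw [hlen]; exact lt_min (Nat.lt_succ_of_le hjk) j.2, rfl⟩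
  · rintro ⟨j, hj, rfl⟩
    rw [hlen, lt_min_iff] at hj
    exact ⟨⟨j, hj.2⟩, Nat.le_of_lt_succ hj.1, rfl⟩

namespace MGraph

theorem even_card_E (H : MGraph) [Finite H.E] : Even (Nat.card H.E) := by
  classical
  have := Fintype.ofFinite H.E
  let σ : Equiv.Perm H.E := Function.Involutive.toPerm H.bar H.bar_bar
  have hsupp : σ.support = Finset.univ :=
    Finset.eq_univ_of_forall fun e => Equiv.Perm.mem_support.mpr (H.bar_ne e)
  rw [Nat.card_eq_fintype_card, ← Finset.card_univ, ← hsupp, even_iff_two_dvd]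
  exact Equiv.Perm.two_dvd_card_support (sq σ ▸ Equiv.ext H.bar_bar)

theorem two_mul_betti (H : MGraph) [Finite H.E] :
    2 * H.betti = Nat.card H.E - 2 * Nat.card H.V + 2 * H.ncomp := by
  obtain ⟨k, hk⟩ := H.even_card_E
  rw [betti, hk]
  omega

variable {n : ℕ} (G : MGraph) (p : MGraphHom G (Rose n))

def petalEdges (S : Set (Fin n)) : Set G.E := {e | (p.toE e).1 ∈ S}

theorem petalEdges_empty : G.petalEdges p ∅ = ∅ := rfl

theorem petalEdges_univ : G.petalEdges p Set.univ = Set.univ := rfl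

theorem petalEdges_union (S T : Set (Fin n)) :
    G.petalEdges p (S ∪ T) = G.petalEdges p S ∪ G.petalEdges p T := rfl

theorem petalEdges_inter (S T : Set (Fin n)) :
    G.petalEdges p (S ∩ T) = G.petalEdges p S ∩ G.petalEdges p T := rfl

instance [Finite G.E] (S : Set (Fin n)) : Finite (petalSub G p S).E := Subtype.finite

theorem compSetoid_petalSub (S : Set (Fin n)) :
    (petalSub G p S).compSetoid = G.setoidOn (G.petalEdges p S) := by
  have hadj : (petalSub G p S).Adj = G.adjOn (G.petalEdges p S) := by
    ext u v
    exact ⟨fun ⟨e, hu, hv⟩ => ⟨e.1, e.2, hu, hv⟩, fun ⟨e, he, hu, hv⟩ => ⟨⟨e, he⟩, hu, hv⟩⟩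
  ext u v
  show Relation.EqvGen _ u v ↔ Relation.EqvGen _ u v
  rw [hadj]

theorem compSetoid_eq_setoidOn_univ : G.compSetoid = G.setoidOn Set.univ := by
  have hadj : G.Adj = G.adjOn Set.univ := by
    ext u v
    exact ⟨fun ⟨e, hu, hv⟩ => ⟨e, trivial, hu, hv⟩, fun ⟨e, _, hu, hv⟩ => ⟨e, hu, hv⟩⟩
  ext u v
  show Relation.EqvGen _ u v ↔ Relation.EqvGen _ u v
  rw [hadj]

variable [Finite G.E]

theorem two_mul_betti_petalSub (S : Set (Fin n)) :
    2 * (petalSub G p S).betti = G.twiceBettiOn (G.petalEdges p S) := by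
  rw [two_mul_betti, twiceBettiOn, ncompOn, ← compSetoid_petalSub, ← Nat.card_coe_set_eq]
  rfl

theorem betti_petalSub_univ : (petalSub G p Set.univ).betti = G.betti := by
  have h := G.two_mul_betti_petalSub p Set.univ
  rw [petalEdges_univ, twiceBettiOn, ncompOn, ← compSetoid_eq_setoidOn_univ, Set.ncard_univ,
    ← ncomp, ← two_mul_betti] at h
  omega

variable [Finite G.V]

theorem betti_petalSub_empty_nonpos : (petalSub G p ∅).betti ≤ 0 := by
  have h := G.two_mul_betti_petalSub p ∅
  have hcomp : G.ncompOn ∅ ≤ Nat.card G.V :=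
    Nat.card_le_card_of_surjective _ Quotient.mk_surjective
  rw [petalEdges_empty, twiceBettiOn, Set.ncard_empty] at h
  omega

theorem isSupermodular_betti_petalSub :
    IsSupermodular fun S : Finset (Fin n) => (petalSub G p S).betti := by
  intro S T
  have h := G.isSupermodular_twiceBettiOn (G.petalEdges p S) (G.petalEdges p T)
  simp only [Set.sup_eq_union, Set.inf_eq_inter, ← petalEdges_union, ← petalEdges_inter,
    ← two_mul_betti_petalSub] at h
  simp only [Finset.sup_eq_union, Finset.inf_eq_inter, Finset.coe_union, Finset.coe_inter]
  omega

end MGraph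

theorem petal_betti_filtration_general (n : ℕ) (G : MGraph)
    [Finite G.V] [Finite G.E]
    (p : MGraphHom G (Rose n))
    (hb : G.betti ≤ 2 * (n : ℤ) - 1) :
    ∃ σ : Equiv.Perm (Fin n), ∀ k : Fin n,
      (petalSub G p {i : Fin n | ∃ j : Fin n, j ≤ k ∧ σ j = i}).betti
        ≤ 2 * ((k : ℤ) + 1) - 1 := by
  have huniv :
      (petalSub G p ↑(Finset.univ : Finset (Fin n))).betti < 2 * Fintype.card (Fin n) := by
    rw [Finset.coe_univ, G.betti_petalSub_univ p, Fintype.card_fin]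
    omega
  obtain ⟨l, hl, hlen, hlt⟩ := (G.isSupermodular_betti_petalSub p).exists_list_lt
    (by simpa using G.betti_petalSub_empty_nonpos p) huniv
  rw [Fintype.card_fin] at hlen hlt
  obtain ⟨σ, hσ⟩ := hl.exists_perm_setOf_le hlen
  refine ⟨σ, fun k => ?_⟩
  have := hlt k k.isLt
  rw [hσ k]
  omega

/-- after a suitable permutation of the petals, the subgraphs
`Γ_{S_k}` over the first `k` petals satisfy `b(Γ_{S_k}) ≤ 2k - 1` for all
`k = 1,…,n`. -/
theorem petal_betti_filtration (n : ℕ) (hn : 2 ≤ n) (G : MGraph)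
    [Finite G.V] [Finite G.E]
    (p : MGraphHom G (Rose n)) (hps : p.PathSurjective)
    (hb : G.betti ≤ 2 * (n : ℤ) - 1) :
    ∃ σ : Equiv.Perm (Fin n), ∀ k : Fin n,
      (petalSub G p {i : Fin n | ∃ j : Fin n, j ≤ k ∧ σ j = i}).betti
        ≤ 2 * ((k : ℤ) + 1) - 1 :=
  petal_betti_filtration_general n G p hb
end

section
/- Let Δ be a finite connected core graph with first Betti number m ≥ 2. Then Δ is the union of at most 3m − 3 maximal arcs. If instead (Δ, v_0) is a finite connected core pair with first Betti number m ≥ 2, then Δ is the union of at most 3m − 1 maximal arcs. -/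
/-- A witness that the edge set `A` is an arc: a nonempty simple edge-path
(possibly closed) whose interior vertices have degree 2 in the ambient graph,
whose (unoriented) edges form `A`. -/
def IsArcWitness (G : MGraph) (A : Set G.E) (γ : List G.E) : Prop :=
  γ ≠ [] ∧ G.IsChain γ ∧ (γ.map G.ini).Nodup ∧ (γ.map G.ter).Nodup ∧
    List.Chain' (fun e _ => G.degree (G.ter e) = 2) γ ∧
    A = {e | e ∈ γ ∨ G.bar e ∈ γ}

/-- A maximal arc: an arc whose two endpoints have degree `≠ 2`. -/
def IsMaximalArc (G : MGraph) (A : Set G.E) : Prop :=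
  ∃ (γ : List G.E) (h : γ ≠ []), IsArcWitness G A γ ∧
    G.degree (G.ini (γ.head h)) ≠ 2 ∧ G.degree (G.ter (γ.getLast h)) ≠ 2


/-! Continue an oriented edge `e` leaving a vertex of degree `≠ 2` through the vertices of
degree `2`, always taking the other edge there, until a vertex of degree `≠ 2` is reached. In a
finite graph this happens, and the path is simple, because `next` is injective on edges ending at
degree-2 vertices and `next (bar (next e)) = bar e`: the path can neither return to its start
nor fold back onto itself. Its edge set is a maximal arc, and starting from the reverse of its
last edge gives the same arc, so every arc arises from at least two starting edges. If the graph
is connected and not a cycle, these arcs cover it.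

So there are at most `S / 2` arcs, where `S = ∑_{deg v ≠ 2} deg v` counts the starting edges.
The handshake lemma and Euler's formula give `∑_v (deg v - 2) = 2m - 2`; as
`deg v ≤ 3 (deg v - 2)` when `deg v ≥ 3` and `1 = 3 (1 - 2) + 4`, we get `S ≤ 6m - 6 + 4k`,
where `k` is the number of vertices of degree `1`: `k = 0` for a core graph and `k ≤ 1` for a
core pair.
-/

lemma Finset.two_mul_card_image_le {α β : Type*} [DecidableEq β] {s : Finset α} {f : α → β}
    (r : α → α) (hr : ∀ x ∈ s, r x ∈ s ∧ r x ≠ x ∧ f (r x) = f x) :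
    2 * (s.image f).card ≤ s.card :=
  Finset.mul_card_image_le_card s 2 fun b hb => by
    obtain ⟨x, hx, rfl⟩ := Finset.mem_image.1 hb
    obtain ⟨hrx, hne, hf⟩ := hr x hx
    exact Finset.one_lt_card.2 ⟨x, by simp [hx], r x, by simp [hrx, hf], hne.symm⟩

namespace MGraph

variable {G : MGraph}

@[simp] lemma ini_bar (e : G.E) : G.ini (G.bar e) = G.ter e := rfl

@[simp] lemma ter_bar (e : G.E) : G.ter (G.bar e) = G.ini e := by
  rw [ter, G.bar_bar]

lemma bar_involutive : Function.Involutive G.bar := G.bar_bar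

lemma Adj.symm {u v : G.V} (h : G.Adj u v) : G.Adj v u := by
  obtain ⟨e, rfl, rfl⟩ := h
  exact ⟨G.bar e, rfl, ter_bar e⟩

lemma Connected.forall_of_adj {p : G.V → Prop} (hconn : G.Connected)
    (hp : ∀ u v, G.Adj u v → p u → p v) {u : G.V} (hu : p u) (v : G.V) : p v := by
  have key : ∀ a b, Relation.EqvGen G.Adj a b → (p a ↔ p b) := by
    intro a b h
    induction h with
    | rel a b hab => exact ⟨hp a b hab, hp b a hab.symm⟩
    | refl a => exact Iff.rfl
    | symm a b _ ih => exact ih.symm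
    | trans a b c _ _ ih₁ ih₂ => exact ih₁.trans ih₂
  exact (key u v (hconn.2 u v)).1 hu

lemma ncomp_eq_one (hconn : G.Connected) : G.ncomp = 1 := by
  rw [ncomp, Nat.card_eq_one_iff_unique]
  refine ⟨⟨fun a b => ?_⟩, ⟨Quotient.mk G.compSetoid hconn.1.some⟩⟩
  exact Quotient.inductionOn₂ a b fun u v => Quotient.sound (hconn.2 u v)

lemma existsUnique_ini_eq_ne {v : G.V} {a : G.E} (ha : G.ini a = v) (hv : G.degree v = 2) :
    ∃! b, G.ini b = v ∧ b ≠ a := by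
  obtain ⟨⟨b, hb⟩, hba, huniq⟩ := (Nat.card_eq_two_iff' (⟨a, ha⟩ : {e // G.ini e = v})).1 hv
  refine ⟨b, ⟨hb, fun h => hba (Subtype.ext h)⟩, fun c ⟨hc, hca⟩ => ?_⟩
  exact congrArg Subtype.val (huniq ⟨c, hc⟩ fun h => hca (congrArg Subtype.val h))

open Classical in
variable (G) in
/-- The other edge at `ter e` when that vertex has degree `2`; junk otherwise. -/
noncomputable def next (e : G.E) : G.E :=
  if h : ∃ z, G.ini z = G.ter e ∧ z ≠ G.bar e then h.choose else e

section Next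

variable {e : G.E} (he : G.degree (G.ter e) = 2)
include he

lemma ini_next_and_next_ne_bar : G.ini (G.next e) = G.ter e ∧ G.next e ≠ G.bar e := by
  have h := (existsUnique_ini_eq_ne (ini_bar e) he).exists
  rw [next, dif_pos h]
  exact h.choose_spec

lemma ini_next : G.ini (G.next e) = G.ter e := (ini_next_and_next_ne_bar he).1

lemma next_ne_bar : G.next e ≠ G.bar e := (ini_next_and_next_ne_bar he).2

lemma eq_next_or_eq_bar {z : G.E} (hz : G.ini z = G.ter e) : z = G.next e ∨ z = G.bar e :=
  or_iff_not_imp_right.2 fun hzb =>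
    (existsUnique_ini_eq_ne (ini_bar e) he).unique ⟨hz, hzb⟩ (ini_next_and_next_ne_bar he)

lemma next_bar_next : G.next (G.bar (G.next e)) = G.bar e := by
  have he' : G.degree (G.ter (G.bar (G.next e))) = 2 := by rwa [ter_bar, ini_next he]
  refine (eq_next_or_eq_bar he (by rw [ini_next he', ter_bar, ini_next he])).resolve_left ?_
  intro h
  exact next_ne_bar he' (by rw [h, G.bar_bar])

lemma next_injective {e' : G.E} (he' : G.degree (G.ter e') = 2) (h : G.next e = G.next e') :
    e = e' := by
  have hter : G.ter e = G.ter e' := by rw [← ini_next he, h, ini_next he']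
  refine bar_involutive.injective ((eq_next_or_eq_bar he (z := G.bar e')
    (by rw [ini_bar, hter])).resolve_left fun h' => next_ne_bar he' ?_).symm
  rw [← h, h']

end Next

section Iterate

variable {e : G.E} {n : ℕ}

lemma ini_iterate_next_succ {i : ℕ} (h : G.degree (G.ter (G.next^[i] e)) = 2) :
    G.ini (G.next^[i + 1] e) = G.ter (G.next^[i] e) := by
  rw [Function.iterate_succ_apply', ini_next h]

variable (H : ∀ i < n, G.degree (G.ter (G.next^[i] e)) = 2)
include H

lemma iterate_next_bar_iterate_next {i : ℕ} (hi : i ≤ n) :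
    G.next^[i] (G.bar (G.next^[n] e)) = G.bar (G.next^[n - i] e) := by
  induction i with
  | zero => rfl
  | succ i ih =>
    rw [Function.iterate_succ_apply', ih (by omega), show n - i = n - (i + 1) + 1 by omega,
      Function.iterate_succ_apply', next_bar_next (H _ (by omega))]

lemma iterate_next_ne_bar_iterate_next {a b : ℕ} (hab : a ≤ b) (hb : b ≤ n) :
    G.next^[b] e ≠ G.bar (G.next^[a] e) := by
  intro h
  -- walking back from `next^[b] e` retraces the path forwards from `next^[a] e`,
  -- so it would meet itself, reversed, at the middle of `[a, b]`
  have retrace : ∀ i ≤ b, G.next^[i + a] e = G.bar (G.next^[b - i] e) := fun i hi => by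
    rw [← iterate_next_bar_iterate_next (fun k hk => H k (by omega)) hi, h, G.bar_bar,
      Function.iterate_add_apply]
  obtain ⟨c, hc | hc⟩ := Nat.even_or_odd' (b - a)
  · have := retrace c (by omega)
    rw [show b - c = c + a by omega] at this
    exact G.bar_ne _ this.symm
  · have := congrArg G.bar (retrace c (by omega))
    rw [G.bar_bar, show b - c = c + a + 1 by omega, Function.iterate_succ_apply'] at this
    exact next_ne_bar (H _ (by omega)) this.symm

variable (hS : G.degree (G.ini e) ≠ 2)
include hS

lemma iterate_next_ne_iterate_next {i j : ℕ} (hij : i < j) (hj : j ≤ n) :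
    G.next^[i] e ≠ G.next^[j] e := by
  induction i generalizing j with
  | zero =>
    obtain ⟨j, rfl⟩ : ∃ k, j = k + 1 := ⟨j - 1, by omega⟩
    intro h
    apply hS
    rw [← Function.iterate_zero_apply G.next e, h, ini_iterate_next_succ (H j (by omega))]
    exact H j (by omega)
  | succ i ih =>
    obtain ⟨j, rfl⟩ : ∃ k, j = k + 1 := ⟨j - 1, by omega⟩
    intro h
    rw [Function.iterate_succ_apply', Function.iterate_succ_apply'] at h
    exact ih (by omega) (by omega) (next_injective (H i (by omega)) (H j (by omega)) h)

lemma ini_iterate_next_ne {i j : ℕ} (hij : i < j) (hj : j ≤ n) :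
    G.ini (G.next^[i] e) ≠ G.ini (G.next^[j] e) := by
  obtain ⟨j, rfl⟩ : ∃ k, j = k + 1 := ⟨j - 1, by omega⟩
  have hj2 := H j (by omega)
  rw [ini_iterate_next_succ hj2]
  intro h
  rcases eq_next_or_eq_bar hj2 h with h' | h'
  · rw [← Function.iterate_succ_apply' G.next] at h'
    exact iterate_next_ne_iterate_next H hS hij hj h'
  · exact iterate_next_ne_bar_iterate_next H (by omega : i ≤ j) (by omega)
      (by rw [h', G.bar_bar])

lemma ter_iterate_next_ne (hn : G.degree (G.ter (G.next^[n] e)) ≠ 2) {i j : ℕ} (hij : i < j)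
    (hj : j ≤ n) : G.ter (G.next^[i] e) ≠ G.ter (G.next^[j] e) := by
  have hi := H i (by omega)
  rcases hj.lt_or_eq with hj | rfl
  · rw [← ini_iterate_next_succ hi, ← ini_iterate_next_succ (H j hj)]
    exact ini_iterate_next_ne H hS (by omega) hj
  · exact fun h => hn (h ▸ hi)

end Iterate

lemma exists_degree_ter_iterate_next_ne_two [Finite G.E] {e : G.E}
    (hS : G.degree (G.ini e) ≠ 2) : ∃ j, G.degree (G.ter (G.next^[j] e)) ≠ 2 := by
  by_contra! H
  refine not_injective_infinite_finite (fun i : ℕ => G.next^[i] e)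
    (Function.Injective.of_lt_imp_ne fun i j hij => ?_)
  exact iterate_next_ne_iterate_next (fun k _ => H k) hS hij le_rfl

variable (G) in
/-- The number of degree-2 vertices crossed when continuing `e` with `next`
(`0` if a vertex of degree `≠ 2` is never reached). -/
noncomputable def arcLength (e : G.E) : ℕ :=
  sInf {j | G.degree (G.ter (G.next^[j] e)) ≠ 2}

variable (G) in
noncomputable def arcPath (e : G.E) : List G.E :=
  List.ofFn fun i : Fin (G.arcLength e + 1) => G.next^[i] e

variable (G) in
def arcSet (e : G.E) : Set G.E := {z | z ∈ G.arcPath e ∨ G.bar z ∈ G.arcPath e}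

variable (G) in
noncomputable def arcReverse (e : G.E) : G.E := G.bar (G.next^[G.arcLength e] e)

section Arc

variable {e : G.E}

lemma degree_ter_iterate_next_of_lt_arcLength {i : ℕ} (hi : i < G.arcLength e) :
    G.degree (G.ter (G.next^[i] e)) = 2 :=
  not_not.1 (Nat.notMem_of_lt_sInf hi)

lemma degree_ter_iterate_arcLength [Finite G.E] (hS : G.degree (G.ini e) ≠ 2) :
    G.degree (G.ter (G.next^[G.arcLength e] e)) ≠ 2 :=
  Nat.sInf_mem (exists_degree_ter_iterate_next_ne_two hS)

lemma arcLength_eq {n : ℕ} (H : ∀ i < n, G.degree (G.ter (G.next^[i] e)) = 2)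
    (hn : G.degree (G.ter (G.next^[n] e)) ≠ 2) : G.arcLength e = n :=
  le_antisymm (Nat.sInf_le hn) (le_csInf ⟨n, hn⟩ fun _ hj => not_lt.1 fun h => hj (H _ h))

lemma mem_arcPath {z : G.E} : z ∈ G.arcPath e ↔ ∃ i ≤ G.arcLength e, G.next^[i] e = z := by
  simp only [arcPath, List.mem_ofFn]
  exact ⟨fun ⟨i, hi⟩ => ⟨i, by omega, hi⟩, fun ⟨i, hi, h⟩ => ⟨⟨i, by omega⟩, h⟩⟩

lemma mem_arcSet {z : G.E} :
    z ∈ G.arcSet e ↔ ∃ i ≤ G.arcLength e, G.next^[i] e = z ∨ G.next^[i] e = G.bar z := by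
  simp only [arcSet, Set.mem_ofPred_eq, mem_arcPath]
  grind

lemma mem_arcSet_self : e ∈ G.arcSet e := mem_arcSet.2 ⟨0, Nat.zero_le _, Or.inl rfl⟩

lemma bar_mem_arcSet {z : G.E} : G.bar z ∈ G.arcSet e ↔ z ∈ G.arcSet e := by
  simp only [arcSet, Set.mem_ofPred_eq, G.bar_bar, or_comm]

lemma iterate_next_arcReverse {i : ℕ} (hi : i ≤ G.arcLength e) :
    G.next^[i] (G.arcReverse e) = G.bar (G.next^[G.arcLength e - i] e) :=
  iterate_next_bar_iterate_next (fun _ => degree_ter_iterate_next_of_lt_arcLength) hi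

lemma arcReverse_ne : G.arcReverse e ≠ e := fun h =>
  iterate_next_ne_bar_iterate_next (e := e) (fun _ => degree_ter_iterate_next_of_lt_arcLength)
    (Nat.zero_le _) le_rfl (G.bar_involutive.eq_iff.1 h)

variable (hS : G.degree (G.ini e) ≠ 2)
include hS

theorem isMaximalArc_arcSet [Finite G.E] : IsMaximalArc G (G.arcSet e) := by
  have H : ∀ i < G.arcLength e, G.degree (G.ter (G.next^[i] e)) = 2 :=
    fun _ => degree_ter_iterate_next_of_lt_arcLength
  have hne : G.arcPath e ≠ [] := by simp [arcPath]
  refine ⟨G.arcPath e, hne, ⟨hne, ?_, ?_, ?_, ?_, rfl⟩, by simpa [arcPath] using hS, ?_⟩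
  · exact List.isChain_ofFn.2 fun i hi => (ini_iterate_next_succ (H i (by omega))).symm
  · rw [arcPath, List.map_ofFn, List.nodup_ofFn]
    exact Function.Injective.of_lt_imp_ne fun i j hij =>
      ini_iterate_next_ne H hS hij (by omega)
  · rw [arcPath, List.map_ofFn, List.nodup_ofFn]
    exact Function.Injective.of_lt_imp_ne fun i j hij =>
      ter_iterate_next_ne H hS (degree_ter_iterate_arcLength hS) hij (by omega)
  · exact List.isChain_ofFn.2 fun i hi => H i (by omega)
  · simp only [arcPath, List.getLast_ofFn]
    exact degree_ter_iterate_arcLength hS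

lemma arcLength_arcReverse : G.arcLength (G.arcReverse e) = G.arcLength e := by
  refine arcLength_eq (fun i hi => ?_) ?_
  · rw [iterate_next_arcReverse hi.le, ter_bar, show G.arcLength e - i = G.arcLength e - i - 1 + 1
      by omega, ini_iterate_next_succ (degree_ter_iterate_next_of_lt_arcLength (by omega))]
    exact degree_ter_iterate_next_of_lt_arcLength (by omega)
  · rwa [iterate_next_arcReverse le_rfl, Nat.sub_self, ter_bar]

lemma degree_ini_arcReverse [Finite G.E] : G.degree (G.ini (G.arcReverse e)) ≠ 2 :=
  degree_ter_iterate_arcLength hS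

lemma arcSet_arcReverse : G.arcSet (G.arcReverse e) = G.arcSet e := by
  ext z
  simp only [mem_arcSet, arcLength_arcReverse hS]
  constructor
  · rintro ⟨i, hi, h⟩
    rw [iterate_next_arcReverse hi, G.bar_involutive.eq_iff, G.bar_involutive.eq_iff,
      G.bar_bar] at h
    exact ⟨_, Nat.sub_le _ _, h.symm⟩
  · rintro ⟨i, hi, h⟩
    refine ⟨G.arcLength e - i, Nat.sub_le _ _, ?_⟩
    rw [iterate_next_arcReverse (Nat.sub_le _ _), Nat.sub_sub_self hi,
      G.bar_involutive.eq_iff, G.bar_involutive.eq_iff, G.bar_bar]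
    exact h.symm

lemma mem_arcSet_of_next_mem [Finite G.E] {z : G.E} (hz : G.degree (G.ter z) = 2)
    (h : G.next z ∈ G.arcSet e) : z ∈ G.arcSet e := by
  obtain ⟨i, hi, h | h⟩ := mem_arcSet.1 h
  · obtain ⟨i, rfl⟩ : ∃ k, i = k + 1 := by
      refine ⟨i - 1, (Nat.succ_pred_eq_of_ne_zero fun h0 => hS ?_).symm⟩
      rw [← Function.iterate_zero_apply G.next e, ← h0, h, ini_next hz]
      exact hz
    have hi2 := degree_ter_iterate_next_of_lt_arcLength (e := e) (by omega : i < G.arcLength e)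
    rw [Function.iterate_succ_apply'] at h
    exact mem_arcSet.2 ⟨i, by omega, Or.inl (next_injective hi2 hz h)⟩
  · have hi : i < G.arcLength e := by
      refine hi.lt_of_ne fun hL => degree_ter_iterate_arcLength hS ?_
      rw [← hL, h, ter_bar, ini_next hz]
      exact hz
    refine mem_arcSet.2 ⟨i + 1, hi, Or.inr ?_⟩
    rw [Function.iterate_succ_apply', h, next_bar_next hz]

end Arc

theorem exists_mem_arcSet [Finite G.E] (hconn : G.Connected) (hv : ∃ v, G.degree v ≠ 2)
    (z : G.E) : ∃ x, G.degree (G.ini x) ≠ 2 ∧ z ∈ G.arcSet x := by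
  set Covered : G.E → Prop := fun z => ∃ x, G.degree (G.ini x) ≠ 2 ∧ z ∈ G.arcSet x
  by_contra hz
  have degree_ini : ∀ y, ¬ Covered y → G.degree (G.ini y) = 2 := fun y hy =>
    not_not.1 fun h => hy ⟨y, h, mem_arcSet_self⟩
  have bar_covered : ∀ y, ¬ Covered y → ¬ Covered (G.bar y) := fun y hy ⟨x, hx, h⟩ =>
    hy ⟨x, hx, bar_mem_arcSet.1 h⟩
  -- the two edges at the degree-2 vertex `ini y` are `y` and `next (bar y)`
  have star_uncovered : ∀ y, ¬ Covered y → ∀ w, G.ini w = G.ini y → ¬ Covered w := by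
    intro y hy w hw
    have hy2 : G.degree (G.ter (G.bar y)) = 2 := by rw [ter_bar]; exact degree_ini y hy
    rcases eq_next_or_eq_bar hy2 (by rw [hw, ter_bar]) with rfl | rfl
    · exact fun ⟨x, hx, h⟩ => bar_covered y hy ⟨x, hx, mem_arcSet_of_next_mem hx hy2 h⟩
    · rwa [G.bar_bar]
  have all_uncovered : ∀ v, ∃ y, G.ini y = v ∧ ¬ Covered y := by
    refine hconn.forall_of_adj (fun u v ⟨w, hwu, hwv⟩ ⟨y, hyu, hy⟩ => ?_) ⟨z, rfl, hz⟩
    exact ⟨G.bar w, hwv, bar_covered w (star_uncovered y hy w (hwu.trans hyu.symm))⟩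
  obtain ⟨v, hv⟩ := hv
  obtain ⟨y, rfl, hy⟩ := all_uncovered v
  exact hv (degree_ini y hy)

section Counting

open Finset

variable (G) [Fintype G.E]

lemma even_card_edges : Even (Fintype.card G.E) := by
  rw [← ZMod.natCast_eq_zero_iff_even, Fintype.card_eq_sum_ones, Nat.cast_sum]
  exact sum_involution (fun e _ => G.bar e) (fun _ _ => rfl) (fun e _ _ => G.bar_ne e)
    (fun _ _ => mem_univ _) (fun e _ => G.bar_bar e)

variable [Fintype G.V]

lemma sum_comp_ini {M : Type*} [AddCommMonoid M] (f : G.V → M) :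
    ∑ e, f (G.ini e) = ∑ v, G.degree v • f v := by
  classical
  rw [← Fintype.sum_fiberwise' G.ini f]
  simp [degree, Nat.card_eq_fintype_card]

lemma sum_degree : ∑ v, G.degree v = Fintype.card G.E := by
  rw [Fintype.card_eq_sum_ones, G.sum_comp_ini fun _ => 1]
  simp

variable {G}

lemma card_edges_eq (hconn : G.Connected) :
    (Fintype.card G.E : ℤ) = 2 * Fintype.card G.V + 2 * G.betti - 2 := by
  obtain ⟨t, ht⟩ := G.even_card_edges
  rw [betti, ncomp_eq_one hconn, Nat.card_eq_fintype_card, Nat.card_eq_fintype_card, ht]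
  omega

lemma exists_degree_ne_two (hconn : G.Connected) (hb : G.betti ≠ 1) : ∃ v, G.degree v ≠ 2 := by
  by_contra! h
  have := card_edges_eq hconn
  rw [← G.sum_degree, sum_congr rfl fun v _ => h v] at this
  simp only [sum_const, card_univ, smul_eq_mul, Nat.cast_mul, Nat.cast_ofNat] at this
  omega

lemma card_filter_degree_ini_ne_two_le (hconn : G.Connected) (hpos : ∀ v, 1 ≤ G.degree v) :
    (#{e | G.degree (G.ini e) ≠ 2} : ℤ) ≤ 6 * G.betti - 6 + 4 * #{v | G.degree v = 1} := by
  have pointwise : ∀ v, G.degree v • (if G.degree v ≠ 2 then 1 else 0 : ℤ) ≤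
      3 * ((G.degree v : ℤ) - 2) + 4 * (if G.degree v = 1 then 1 else 0) := by
    intro v
    have := hpos v
    rw [nsmul_eq_mul]
    split_ifs <;> omega
  have hE : (Fintype.card G.E : ℤ) = ∑ v, (G.degree v : ℤ) := by
    exact_mod_cast G.sum_degree.symm
  calc (#{e | G.degree (G.ini e) ≠ 2} : ℤ)
      = ∑ v, G.degree v • (if G.degree v ≠ 2 then 1 else 0 : ℤ) := by
        rw [natCast_card_filter, ← G.sum_comp_ini]
    _ ≤ ∑ v, (3 * ((G.degree v : ℤ) - 2) + 4 * (if G.degree v = 1 then 1 else 0)) :=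
        sum_le_sum fun v _ => pointwise v
    _ = 3 * (Fintype.card G.E - 2 * Fintype.card G.V) + 4 * #{v | G.degree v = 1} := by
        rw [sum_add_distrib, ← mul_sum, ← mul_sum, sum_sub_distrib, hE, natCast_card_filter]
        simp [mul_comm]
    _ = _ := by rw [card_edges_eq hconn]; ring

end Counting

theorem exists_maximalArc_cover [Finite G.V] [Finite G.E] (hconn : G.Connected)
    (hpos : ∀ v, 1 ≤ G.degree v) {m : ℕ} (hm : 2 ≤ m) (hb : G.betti = m) :
    ∃ arcs : Set (Set G.E), arcs.Finite ∧
      Nat.card arcs ≤ 3 * m - 3 + 2 * {v | G.degree v = 1}.ncard ∧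
      (∀ A ∈ arcs, IsMaximalArc G A) ∧ ⋃₀ arcs = Set.univ := by
  classical
  have := Fintype.ofFinite G.V
  have := Fintype.ofFinite G.E
  have hcount := card_filter_degree_ini_ne_two_le hconn hpos
  set S : Finset G.E := {e | G.degree (G.ini e) ≠ 2}
  have mem_S : ∀ {x}, x ∈ S ↔ G.degree (G.ini x) ≠ 2 := by simp [S]
  refine ⟨S.image G.arcSet, Finset.finite_toSet _, ?_, ?_, ?_⟩
  · have hpairs := Finset.two_mul_card_image_le (f := G.arcSet) G.arcReverse fun x hx =>
      ⟨mem_S.2 (degree_ini_arcReverse (mem_S.1 hx)), arcReverse_ne,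
        arcSet_arcReverse (mem_S.1 hx)⟩
    rw [Nat.card_coe_set_eq, Set.ncard_coe_finset, Set.ncard_eq_toFinset_card',
      Set.toFinset_ofPred]
    rw [hb] at hcount
    omega
  · simp only [Finset.coe_image, Set.mem_image, Finset.mem_coe, forall_exists_index, and_imp]
    rintro _ x hx rfl
    exact isMaximalArc_arcSet (mem_S.1 hx)
  · refine Set.eq_univ_of_forall fun z => ?_
    obtain ⟨x, hx, hz⟩ := exists_mem_arcSet hconn (exists_degree_ne_two hconn (by omega)) z
    exact ⟨_, Finset.mem_coe.2 (Finset.mem_image_of_mem _ (mem_S.2 hx)), hz⟩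

end MGraph

/-- a finite connected core graph of Betti number `m ≥ 2` is the
union of at most `3m - 3` maximal arcs; a finite connected core pair
`(Δ, v₀)` of Betti number `m ≥ 2` is the union of at most `3m - 1` maximal
arcs. -/
theorem core_graph_union_of_maximal_arcs :
    (∀ (Δ : MGraph), Finite Δ.V → Finite Δ.E → Δ.Connected →
      (∀ v : Δ.V, 2 ≤ Δ.degree v) → ∀ m : ℕ, 2 ≤ m → Δ.betti = (m : ℤ) →
      ∃ arcs : Set (Set Δ.E), arcs.Finite ∧ Nat.card arcs ≤ 3 * m - 3 ∧
        (∀ A ∈ arcs, IsMaximalArc Δ A) ∧ ⋃₀ arcs = (Set.univ : Set Δ.E)) ∧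
    (∀ (Δ : MGraph) (v₀ : Δ.V), Finite Δ.V → Finite Δ.E → Δ.Connected →
      (∀ v : Δ.V, v ≠ v₀ → 2 ≤ Δ.degree v) → 1 ≤ Δ.degree v₀ →
      ∀ m : ℕ, 2 ≤ m → Δ.betti = (m : ℤ) →
      ∃ arcs : Set (Set Δ.E), arcs.Finite ∧ Nat.card arcs ≤ 3 * m - 1 ∧
        (∀ A ∈ arcs, IsMaximalArc Δ A) ∧ ⋃₀ arcs = (Set.univ : Set Δ.E)) := by
  refine ⟨fun Δ _ _ hconn hdeg m hm hb => ?_, fun Δ v₀ _ _ hconn hdeg hdeg₀ m hm hb => ?_⟩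
  · have hpos : ∀ v, 1 ≤ Δ.degree v := fun v => (hdeg v).trans' one_le_two
    have hleaves : {v | Δ.degree v = 1} = ∅ :=
      Set.eq_empty_of_forall_notMem fun v (hv : Δ.degree v = 1) => by have := hdeg v; omega
    obtain ⟨arcs, hfin, hcard, hcover⟩ := Δ.exists_maximalArc_cover hconn hpos hm hb
    exact ⟨arcs, hfin, by simpa [hleaves] using hcard, hcover⟩
  · have hpos : ∀ v, 1 ≤ Δ.degree v := fun v =>
      (eq_or_ne v v₀).elim (fun h => h ▸ hdeg₀) fun h => (hdeg v h).trans' one_le_two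
    have hleaves : {v | Δ.degree v = 1}.ncard ≤ 1 := by
      refine (Set.ncard_le_ncard (t := {v₀}) (fun v (hv : Δ.degree v = 1) => ?_)).trans
        (Set.ncard_singleton v₀).le
      by_contra h
      have := hdeg v h
      omega
    obtain ⟨arcs, hfin, hcard, hcover⟩ := Δ.exists_maximalArc_cover hconn hpos hm hb
    exact ⟨arcs, hfin, by omega, hcover⟩
end
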